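/- arXiv:2602.18362 — 2 statements merged into one kernel-verified Lean document; each statement's English description precedes it below -/
import Mathlib

section
/- Let G be a finite simple graph that is C_3-free and C_5-free, let R be a minimal redundant set of G, and suppose there exist adjacent vertices x and y with x, y ∈ red(R). Then either R = N[x] or R = N[y]. -/
open Set SimpleGraph

variable {V : Type*}

/-- The closed neighborhood `N[v]` of a vertex. -/
def closedNbr (G : SimpleGraph V) (v : V) : Set V := insert v (G.neighborSet v)

/-- Private neighbors of `x` with respect to `I`. -/
def privSet (G : SimpleGraph V) (x : V) (I : Set V) : Set V :=
  {y ∈ closedNbr G x | closedNbr G y ∩ I = {x}}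

/-- A set is irredundant if every element has a private neighbor. -/
def Irred (G : SimpleGraph V) (I : Set V) : Prop := ∀ x ∈ I, (privSet G x I).Nonempty

/-- A maximal irredundant set. -/
def MaxIrred (G : SimpleGraph V) (I : Set V) : Prop :=
  Irred G I ∧ ∀ J : Set V, Irred G J → I ⊆ J → J = I

def Redundant (G : SimpleGraph V) (R : Set V) : Prop := ¬ Irred G R

def MinRedundant (G : SimpleGraph V) (R : Set V) : Prop :=
  Redundant G R ∧ ∀ S : Set V, S ⊂ R → ¬ Redundant G S

/-- The set of redundant vertices of a set. -/
def redVerts (G : SimpleGraph V) (R : Set V) : Set V := {x ∈ R | privSet G x R = ∅}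

def Dominating (G : SimpleGraph V) (D : Set V) : Prop := ∀ v : V, ∃ d ∈ D, v ∈ closedNbr G d

def MinDominating (G : SimpleGraph V) (D : Set V) : Prop :=
  Dominating G D ∧ ∀ S : Set V, S ⊂ D → ¬ Dominating G S

/-- Vertices at distance at most 2 from `x`. -/
def ball2 (G : SimpleGraph V) (x : V) : Set V :=
  {y | y = x ∨ G.Adj x y ∨ ∃ w, G.Adj x w ∧ G.Adj w y}

/-- Vertices at distance exactly 2 from `x`. -/
def sphere2 (G : SimpleGraph V) (x : V) : Set V :=
  {y | y ≠ x ∧ ¬ G.Adj x y ∧ ∃ w, G.Adj x w ∧ G.Adj w y}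

/-- `G` contains no induced cycle of length `k`. -/
def CFree (G : SimpleGraph V) (k : ℕ) : Prop :=
  IsEmpty (SimpleGraph.cycleGraph k ↪g G)

/-- `S` dominates `B` through open neighborhoods. -/
def DomOver (G : SimpleGraph V) (S B : Set V) : Prop := ∀ b ∈ B, ∃ s ∈ S, G.Adj s b

def MinDomOver (G : SimpleGraph V) (S B : Set V) : Prop :=
  DomOver G S B ∧ ∀ S' : Set V, S' ⊂ S → ¬ DomOver G S' B

/-- `N(Y)`, the union of open neighborhoods of elements of `Y`. -/
def nbrUnion (G : SimpleGraph V) (Y : Set V) : Set V := ⋃ y ∈ Y, G.neighborSet y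

/-- Private edges of `x` with respect to `I` in a hypergraph. -/
def hypPriv (H : Set (Set V)) (x : V) (I : Set V) : Set (Set V) := {E ∈ H | E ∩ I = {x}}

def HypIrred (H : Set (Set V)) (I : Set V) : Prop := ∀ x ∈ I, (hypPriv H x I).Nonempty

def HypMaxIrred (H : Set (Set V)) (I : Set V) : Prop :=
  HypIrred H I ∧ ∀ J : Set V, HypIrred H J → I ⊆ J → J = I

/-- The trace of a hypergraph on a set `S`. -/
def htrace (H : Set (Set V)) (S : Set V) : Set (Set V) :=
  {F | ∃ E ∈ H, F = E ∩ S ∧ (E ∩ S).Nonempty}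

/-- The closed-neighborhood hypergraph of a graph. -/
def nbrHyp (G : SimpleGraph V) : Set (Set V) := Set.range (closedNbr G)

/-- The first `i` vertices in the ordering `v` (zero-based: `v 0, …, v (i-1)`). -/
def firstVerts (v : ℕ → V) (i : ℕ) : Set V := {x | ∃ j < i, v j = x}

/-- The incidence co-bipartite graph of the closed-neighborhood hypergraph of `G`:
`Sum.inl` is the vertex side `V`, `Sum.inr` is the copy `U`. -/
def cobip (G : SimpleGraph V) : SimpleGraph (V ⊕ V) :=
  SimpleGraph.fromRel (fun a b => match a, b with
    | Sum.inl _, Sum.inl _ => True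
    | Sum.inr _, Sum.inr _ => True
    | Sum.inl a, Sum.inr b => a = b ∨ G.Adj a b
    | Sum.inr _, Sum.inl _ => False)

lemma mem_closedNbr' {G : SimpleGraph V} {v z : V} :
    z ∈ closedNbr G v ↔ z = v ∨ G.Adj v z := by
  simp [closedNbr, SimpleGraph.neighborSet]

lemma self_mem_closedNbr' (G : SimpleGraph V) (v : V) : v ∈ closedNbr G v :=
  mem_closedNbr'.mpr (Or.inl rfl)

lemma closedNbr_comm' {G : SimpleGraph V} {v z : V} :
    z ∈ closedNbr G v ↔ v ∈ closedNbr G z := by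
  simp only [mem_closedNbr']
  constructor
  · rintro (rfl | h); exacts [Or.inl rfl, Or.inr h.symm]
  · rintro (rfl | h); exacts [Or.inl rfl, Or.inr h.symm]

lemma tri_free {G : SimpleGraph V} (h3 : CFree G 3) {a b c : V}
    (hab : G.Adj a b) (hbc : G.Adj b c) (hac : G.Adj a c) : False := by
  have h1 := hab.ne; have h2 := hbc.ne; have h3' := hac.ne
  refine h3.elim ⟨⟨![a, b, c], ?_⟩, ?_⟩
  · intro i j hij
    fin_cases i <;> fin_cases j <;> simp_all
  · intro i j
    fin_cases i <;> fin_cases j <;>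
      first
      | exact iff_of_true (by first | assumption | exact SimpleGraph.Adj.symm (by assumption)) (by decide)
      | exact iff_of_false (by intro h; first
          | exact absurd h (by assumption)
          | exact absurd h.symm (by assumption)
          | exact G.irrefl h) (by decide)

lemma c5_free {G : SimpleGraph V} (h5 : CFree G 5) {a b c d e : V}
    (hab : G.Adj a b) (hbc : G.Adj b c) (hcd : G.Adj c d) (hde : G.Adj d e)
    (hea : G.Adj e a)
    (hac : ¬ G.Adj a c) (had : ¬ G.Adj a d) (hbd : ¬ G.Adj b d)
    (hbe : ¬ G.Adj b e) (hce : ¬ G.Adj c e) : False := by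
  have h1 := hab.ne; have h2 := hbc.ne; have h3 := hcd.ne
  have h4 := hde.ne; have h5' := hea.ne
  have hac' : a ≠ c := fun h => hce (h ▸ hea.symm)
  have had' : a ≠ d := fun h => hac (by rw [h]; exact hcd.symm)
  have hbd' : b ≠ d := fun h => had (h ▸ hab)
  have hbe' : b ≠ e := fun h => hbd (by rw [h]; exact hde.symm)
  have hce' : c ≠ e := fun h => hbe (h ▸ hbc)
  refine h5.elim ⟨⟨![a, b, c, d, e], ?_⟩, ?_⟩
  · intro i j hij
    fin_cases i <;> fin_cases j <;> simp_all
  · intro i j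
    fin_cases i <;> fin_cases j <;>
      first
      | exact iff_of_true (by first | assumption | exact SimpleGraph.Adj.symm (by assumption)) (by decide)
      | exact iff_of_false (by intro h; first
          | exact absurd h (by assumption)
          | exact absurd h.symm (by assumption)
          | exact G.irrefl h) (by decide)

/-- If `privSet G x R = ∅` and `z ∈ N[x]`, then `N[z] ∩ R ≠ {x}`. -/
lemma priv_empty_ne {G : SimpleGraph V} {x : V} {R : Set V} (h : privSet G x R = ∅)
    {z : V} (hz : z ∈ closedNbr G x) : closedNbr G z ∩ R ≠ {x} := by
  intro hEq
  have := Set.eq_empty_iff_forall_notMem.mp h z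
  exact this ⟨hz, hEq⟩

/-- If `A ∩ (R \ {r}) = {t}` but `A ∩ R ≠ {t}`, then `r ∈ A ∩ R`. -/
lemma mem_of_diff_inter {A R : Set V} {r t : V}
    (h : A ∩ (R \ {r}) = {t}) (hne : A ∩ R ≠ {t}) : r ∈ A ∧ r ∈ R := by
  by_contra hc
  apply hne
  ext s
  constructor
  · rintro ⟨hs1, hs2⟩
    have hsr : s ≠ r := fun e => hc (e ▸ ⟨hs1, hs2⟩)
    have : s ∈ A ∩ (R \ {r}) := ⟨hs1, hs2, hsr⟩
    rw [h] at this; exact this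
  · intro hs
    have ht : t ∈ A ∩ (R \ {r}) := by rw [h]; rfl
    rcases hs with rfl
    exact ⟨ht.1, ht.2.1⟩

/-- `priv(x,R) = ∅` gives, for each `z ∈ N[x]`, a second vertex of `R` in `N[z]`. -/
lemma priv_empty_exists {G : SimpleGraph V} {x : V} {R : Set V} (hxR : x ∈ R)
    (h : privSet G x R = ∅) {z : V} (hz : z ∈ closedNbr G x) :
    ∃ r ∈ R, r ≠ x ∧ r ∈ closedNbr G z := by
  have hne := priv_empty_ne h hz
  by_contra hcon
  push_neg at hcon
  apply hne
  ext w
  constructor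
  · rintro ⟨hw1, hw2⟩
    by_contra hwx
    exact hcon w hw2 hwx hw1
  · rintro rfl
    exact ⟨closedNbr_comm'.mp hz, hxR⟩

/-- Step 1: `N[x] ∩ R = {x,y}` or `N[y] ∩ R = {x,y}`. -/
lemma step1 {G : SimpleGraph V} (h3 : CFree G 3) {R : Set V}
    (hIrr : ∀ S, S ⊂ R → Irred G S) {x y : V} (hadj : G.Adj x y)
    (hx : x ∈ redVerts G R) (hy : y ∈ redVerts G R) :
    closedNbr G x ∩ R = {x, y} ∨ closedNbr G y ∩ R = {x, y} := by
  obtain ⟨hxR, hxp⟩ := hx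
  obtain ⟨hyR, hyp⟩ := hy
  have hsub : R \ {x} ⊂ R := Set.sdiff_singleton_ssubset.mpr hxR
  have hyR' : y ∈ R \ {x} := ⟨hyR, fun h => hadj.ne' (Set.mem_singleton_iff.mp h)⟩
  obtain ⟨w, hw1, hw2⟩ := hIrr _ hsub y hyR'
  have hxw : x ∈ closedNbr G w ∧ x ∈ R := mem_of_diff_inter hw2 (priv_empty_ne hyp hw1)
  have hwx : w ∈ closedNbr G x := closedNbr_comm'.mp hxw.1
  rcases mem_closedNbr'.mp hwx with hwx' | hadjxw
  · -- w = x : N[x] ∩ R = {x, y}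
    left
    rw [hwx'] at hw2
    ext t
    constructor
    · rintro ⟨ht1, ht2⟩
      by_cases htx : t = x
      · exact Or.inl htx
      · have : t ∈ closedNbr G x ∩ (R \ {x}) := ⟨ht1, ht2, htx⟩
        rw [hw2] at this
        exact Or.inr this
    · rintro (rfl | rfl)
      · exact ⟨self_mem_closedNbr' G t, hxR⟩
      · exact ⟨mem_closedNbr'.mpr (Or.inr hadj), hyR⟩
  · rcases mem_closedNbr'.mp hw1 with hwy' | hadjyw
    · -- w = y : N[y] ∩ R = {x, y}
      right
      rw [hwy'] at hw2
      ext t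
      constructor
      · rintro ⟨ht1, ht2⟩
        by_cases htx : t = x
        · exact Or.inl htx
        · have : t ∈ closedNbr G y ∩ (R \ {x}) := ⟨ht1, ht2, htx⟩
          rw [hw2] at this
          exact Or.inr this
      · rintro (rfl | rfl)
        · exact ⟨mem_closedNbr'.mpr (Or.inr hadj.symm), hxR⟩
        · exact ⟨self_mem_closedNbr' G t, hyR⟩
    · exact (tri_free h3 hadj hadjyw hadjxw).elim

/-- Step 2: if `N[x] ∩ R = {x,y}` then `R = N[y]`. -/
lemma step2 {G : SimpleGraph V} (h3 : CFree G 3) (h5 : CFree G 5) {R : Set V}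
    (hIrr : ∀ S, S ⊂ R → Irred G S) {x y : V} (hadj : G.Adj x y)
    (hx : x ∈ redVerts G R) (hy : y ∈ redVerts G R)
    (hcase : closedNbr G x ∩ R = {x, y}) : R = closedNbr G y := by
  obtain ⟨hxR, hxp⟩ := hx
  obtain ⟨hyR, hyp⟩ := hy
  have hxy : x ∈ closedNbr G y := mem_closedNbr'.mpr (Or.inr hadj.symm)
  have hyy : y ∈ closedNbr G y := self_mem_closedNbr' G y
  have hRsub : R ⊆ closedNbr G y := by
    intro r hrR
    by_contra hrny
    have hrnx : r ∉ closedNbr G x := by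
      intro h
      have : r ∈ ({x, y} : Set V) := by rw [← hcase]; exact ⟨h, hrR⟩
      rcases this with rfl | rfl
      · exact hrny hxy
      · exact hrny hyy
    have hrx : r ≠ x := fun h => hrnx (h ▸ self_mem_closedNbr' G x)
    have hsub : R \ {r} ⊂ R := Set.sdiff_singleton_ssubset.mpr hrR
    -- private neighbor z of x in R \ {r}
    obtain ⟨z, hz1, hz2⟩ := hIrr _ hsub x ⟨hxR, fun h => hrx (Set.mem_singleton_iff.mp h).symm⟩
    have hrz : r ∈ closedNbr G z := (mem_of_diff_inter hz2 (priv_empty_ne hxp hz1)).1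
    have hzx : z ≠ x := fun h => hrnx (h ▸ hrz)
    have hadjxz : G.Adj x z := (mem_closedNbr'.mp hz1).resolve_left hzx
    have hzr : z ≠ r := fun h => hrnx (h ▸ hz1)
    have hadjzr : G.Adj z r := (mem_closedNbr'.mp hrz).resolve_left (Ne.symm hzr)
    have hzy : z ≠ y := fun h => hrny (h ▸ hrz)
    have hnadjzy : ¬ G.Adj z y := fun h => tri_free h3 hadj h.symm hadjxz
    -- private neighbor w of y in R \ {r}
    have hry : r ≠ y := fun h => hrny (h ▸ self_mem_closedNbr' G y)
    obtain ⟨w, hw1, hw2⟩ := hIrr _ hsub y ⟨hyR, fun h => hry (Set.mem_singleton_iff.mp h).symm⟩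
    have hrw : r ∈ closedNbr G w := (mem_of_diff_inter hw2 (priv_empty_ne hyp hw1)).1
    have hwy : w ≠ y := fun h => hrny (h ▸ hrw)
    have hadjyw : G.Adj y w := (mem_closedNbr'.mp hw1).resolve_left hwy
    have hwr : w ≠ r := fun h => hrny (h ▸ hw1)
    have hadjwr : G.Adj w r := (mem_closedNbr'.mp hrw).resolve_left (Ne.symm hwr)
    have hxnw : x ∉ closedNbr G w := by
      intro h
      have : x ∈ closedNbr G w ∩ (R \ {r}) := ⟨h, hxR, fun e => hrx (Set.mem_singleton_iff.mp e).symm⟩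
      rw [hw2] at this
      exact hadj.ne (Set.mem_singleton_iff.mp this)
    have hnadjzw : ¬ G.Adj z w := fun h => tri_free h3 h hadjwr hadjzr
    have hnadjxr : ¬ G.Adj x r := fun h => hrnx (mem_closedNbr'.mpr (Or.inr h))
    have hnadjxw : ¬ G.Adj x w := fun h => hxnw (mem_closedNbr'.mpr (Or.inr h.symm))
    have hnadjry : ¬ G.Adj r y := fun h => hrny (mem_closedNbr'.mpr (Or.inr h.symm))
    exact c5_free h5 hadjxz hadjzr hadjwr.symm hadjyw.symm hadj.symm
      hnadjxr hnadjxw hnadjzw hnadjzy hnadjry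
  refine Set.Subset.antisymm hRsub ?_
  intro u hu
  rcases mem_closedNbr'.mp hu with rfl | hadjyu
  · exact hyR
  · by_contra huR
    obtain ⟨r, hrR, hry, hrNu⟩ := priv_empty_exists hyR hyp hu
    have hry' : G.Adj y r := (mem_closedNbr'.mp (hRsub hrR)).resolve_left hry
    have hru : r ≠ u := fun h => huR (h ▸ hrR)
    have hadjur : G.Adj u r := (mem_closedNbr'.mp hrNu).resolve_left hru
    exact tri_free h3 hadjyu hadjur hry'

/-- in a `(C₃, C₅)`-free graph, if a minimal redundant set `R` contains two
adjacent redundant vertices `x` and `y`, then `R = N[x]` or `R = N[y]`. -/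
theorem stmt8 [Fintype V] (G : SimpleGraph V) (h3 : CFree G 3) (h5 : CFree G 5)
    (R : Set V) (hR : MinRedundant G R) (x y : V) (hadj : G.Adj x y)
    (hx : x ∈ redVerts G R) (hy : y ∈ redVerts G R) :
    R = closedNbr G x ∨ R = closedNbr G y := by
  have hIrr : ∀ S, S ⊂ R → Irred G S := fun S hS => not_not.mp (hR.2 S hS)
  rcases step1 h3 hIrr hadj hx hy with hc | hc
  · exact Or.inr (step2 h3 h5 hIrr hadj hx hy hc)
  · exact Or.inl (step2 h3 h5 hIrr hadj.symm hy hx (by rwa [Set.pair_comm] at hc))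
end

section
/- Let G be a finite simple graph that is C_3-free, C_5-free and C_6-free, let R be a minimal redundant set of G, and let x ∈ red(R) be such that |red(R) ∩ N(x)| = 2. Then |R| = 3. -/
open Set SimpleGraph

variable {V : Type*}

/-!
Minimality of `R` means that a redundant vertex `z ∈ R` regains a private neighbour as soon as
any other `t ∈ R` is removed: some `y ∈ N[z]` has `N[y] ∩ R = {z, t}`. Let `a, b` be the two
redundant neighbours of `x`. Triangle-freeness forces `N[a] ∩ R = {x, a}` and
`N[b] ∩ R = {x, b}`, so a fourth vertex `c ∈ R` would be nonadjacent to `a` and `b`. The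
witnesses for the pairs `{a, b}`, `{a, c}`, `{b, c}` are then common neighbours `w`, `u`, `v`,
and `w a u c v b` is an induced 6-cycle.
-/

section

variable {G : SimpleGraph V}

/-- Cycles other than `C₄` have no twins, so adjacency data alone certifies an induced cycle. -/
lemma injective_of_adj_iff {W : Type*} {H : SimpleGraph W}
    (hH : ∀ i j, (∀ l, H.Adj i l ↔ H.Adj j l) → i = j) {f : W → V}
    (hf : ∀ i j, G.Adj (f i) (f j) ↔ H.Adj i j) : f.Injective := fun i j hij =>
  hH i j fun l => by rw [← hf, ← hf, hij]

lemma CFree.false_of_adj_iff {k : ℕ} (hG : CFree G k)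
    (htwin : ∀ i j : Fin k, (∀ l, (cycleGraph k).Adj i l ↔ (cycleGraph k).Adj j l) → i = j)
    (f : Fin k → V) (hf : ∀ i j, G.Adj (f i) (f j) ↔ (cycleGraph k).Adj i j) : False :=
  hG.false ⟨⟨f, injective_of_adj_iff htwin hf⟩, hf _ _⟩

lemma CFree.not_adj_of_adj_of_adj (h3 : CFree G 3) {a b c : V} (hab : G.Adj a b)
    (hbc : G.Adj b c) : ¬ G.Adj a c := fun hac => by
  refine h3.false_of_adj_iff (by decide) ![a, b, c] fun i j => ?_
  fin_cases i <;> fin_cases j <;> simp [hab, hbc, hac, hab.symm, hbc.symm, hac.symm] <;> decide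

lemma CFree.false_of_hexagon (h3 : CFree G 3) (h6 : CFree G 6) {v₀ v₁ v₂ v₃ v₄ v₅ : V}
    (h₀₁ : G.Adj v₀ v₁) (h₁₂ : G.Adj v₁ v₂) (h₂₃ : G.Adj v₂ v₃) (h₃₄ : G.Adj v₃ v₄)
    (h₄₅ : G.Adj v₄ v₅) (h₅₀ : G.Adj v₅ v₀)
    (n₀₃ : ¬ G.Adj v₀ v₃) (n₁₄ : ¬ G.Adj v₁ v₄) (n₂₅ : ¬ G.Adj v₂ v₅) : False := by
  have n₀₂ := h3.not_adj_of_adj_of_adj h₀₁ h₁₂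
  have n₁₃ := h3.not_adj_of_adj_of_adj h₁₂ h₂₃
  have n₂₄ := h3.not_adj_of_adj_of_adj h₂₃ h₃₄
  have n₃₅ := h3.not_adj_of_adj_of_adj h₃₄ h₄₅
  have n₄₀ := h3.not_adj_of_adj_of_adj h₄₅ h₅₀
  have n₅₁ := h3.not_adj_of_adj_of_adj h₅₀ h₀₁
  refine h6.false_of_adj_iff (by decide) ![v₀, v₁, v₂, v₃, v₄, v₅] fun i j => ?_
  fin_cases i <;> fin_cases j <;>
    simp [*, h₀₁.symm, h₁₂.symm, h₂₃.symm, h₃₄.symm, h₄₅.symm, h₅₀.symm, G.adj_comm v₃ v₀,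
      G.adj_comm v₄ v₁, G.adj_comm v₅ v₂, G.adj_comm v₂ v₀, G.adj_comm v₃ v₁, G.adj_comm v₄ v₂,
      G.adj_comm v₅ v₃, G.adj_comm v₀ v₄, G.adj_comm v₁ v₅] <;> decide

variable {R : Set V}

lemma MinRedundant.exists_closedNbr_inter_eq_pair (hR : MinRedundant G R) {z t : V}
    (hz : z ∈ redVerts G R) (ht : t ∈ R) (hzt : z ≠ t) :
    ∃ y ∈ closedNbr G z, closedNbr G y ∩ R = {z, t} := by
  have hirr : Irred G (R \ {t}) := not_not.mp (hR.2 _ (sdiff_singleton_ssubset.mpr ht))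
  obtain ⟨y, hyz, hy⟩ := hirr z ⟨hz.1, hzt⟩
  refine ⟨y, hyz, ?_⟩
  rw [← inter_sdiff_assoc] at hy
  by_cases hty : t ∈ closedNbr G y ∩ R
  · rw [← insert_eq_of_mem hty, ← insert_sdiff_singleton, hy, pair_comm]
  · rw [sdiff_singleton_eq_self hty] at hy
    exact absurd ⟨hyz, hy⟩ (eq_empty_iff_forall_notMem.mp hz.2 y)

lemma MinRedundant.exists_common_nbr (hR : MinRedundant G R) {z t : V}
    (hz : z ∈ redVerts G R) (ht : t ∈ R) (hzt : z ≠ t) (hnadj : ¬ G.Adj z t) :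
    ∃ y, G.Adj z y ∧ G.Adj y t ∧ closedNbr G y ∩ R = {z, t} := by
  obtain ⟨y, hyz, hy⟩ := hR.exists_closedNbr_inter_eq_pair hz ht hzt
  have hty : t ∈ closedNbr G y := (hy.symm.subset (Or.inr rfl)).1
  rcases hyz with rfl | hzy
  · exact (hty.elim (hzt ∘ Eq.symm) hnadj).elim
  · rcases hty with rfl | hyt
    · exact (hnadj hzy).elim
    · exact ⟨y, hzy, hyt, hy⟩

lemma MinRedundant.closedNbr_inter_eq_pair_of_adj (h3 : CFree G 3) (hR : MinRedundant G R)
    {x a b : V} (hx : x ∈ redVerts G R) (ha : a ∈ R) (hb : b ∈ R) (hxa : G.Adj x a)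
    (hxb : G.Adj x b) (hab : a ≠ b) : closedNbr G a ∩ R = {x, a} := by
  obtain ⟨y, hyx, hy⟩ := hR.exists_closedNbr_inter_eq_pair hx ha hxa.ne
  rcases hyx with rfl | hxy
  · exact ((hy.subset ⟨Or.inr hxb, hb⟩ : b = y ∨ b = a).elim hxb.ne' hab.symm).elim
  · rcases (hy.symm.subset (Or.inr rfl)).1 with rfl | hya
    · exact hy
    · exact (h3.not_adj_of_adj_of_adj hxy hya hxa).elim

lemma MinRedundant.subset_of_red_nbrs (h3 : CFree G 3) (h6 : CFree G 6) (hR : MinRedundant G R)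
    {x a b : V} (hx : x ∈ redVerts G R) (ha : a ∈ redVerts G R) (hb : b ∈ redVerts G R)
    (hxa : G.Adj x a) (hxb : G.Adj x b) (hab : a ≠ b) : R ⊆ {x, a, b} := by
  intro c hc
  by_contra hcxab
  simp only [mem_insert_iff, mem_singleton_iff, not_or] at hcxab
  obtain ⟨hcx, hca, hcb⟩ := hcxab
  have hNa := hR.closedNbr_inter_eq_pair_of_adj h3 hx ha.1 hb.1 hxa hxb hab
  have hNb := hR.closedNbr_inter_eq_pair_of_adj h3 hx hb.1 ha.1 hxb hxa hab.symm
  have hac : ¬ G.Adj a c := fun h => (hNa.subset ⟨Or.inr h, hc⟩ : c = x ∨ c = a).elim hcx hca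
  have hbc : ¬ G.Adj b c := fun h => (hNb.subset ⟨Or.inr h, hc⟩ : c = x ∨ c = b).elim hcx hcb
  obtain ⟨w, haw, hwb, hw⟩ :=
    hR.exists_common_nbr ha hb.1 hab (h3.not_adj_of_adj_of_adj hxa.symm hxb)
  obtain ⟨u, hau, huc, hu⟩ := hR.exists_common_nbr ha hc (Ne.symm hca) hac
  obtain ⟨v, hbv, hvc, hv⟩ := hR.exists_common_nbr hb hc (Ne.symm hcb) hbc
  refine h3.false_of_hexagon h6 haw.symm hau huc hvc.symm hbv.symm hwb.symm ?_ ?_ ?_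
  · exact fun h => (hw.subset ⟨Or.inr h, hc⟩ : c = a ∨ c = b).elim hca hcb
  · exact fun h => (hv.subset ⟨Or.inr h.symm, ha.1⟩ : a = b ∨ a = c).elim hab (Ne.symm hca)
  · exact fun h => (hu.subset ⟨Or.inr h, hb.1⟩ : b = a ∨ b = c).elim hab.symm (Ne.symm hcb)

end

theorem stmt13_general (G : SimpleGraph V) (h3 : CFree G 3)
    (h6 : CFree G 6) (R : Set V) (hR : MinRedundant G R) (x : V) (hx : x ∈ redVerts G R)
    (htwo : (redVerts G R ∩ G.neighborSet x).ncard = 2) :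
    R.ncard = 3 := by
  obtain ⟨a, b, hab, hS⟩ := ncard_eq_two.mp htwo
  obtain ⟨ha, hxa⟩ : a ∈ redVerts G R ∩ G.neighborSet x := hS ▸ Or.inl rfl
  obtain ⟨hb, hxb⟩ : b ∈ redVerts G R ∩ G.neighborSet x := hS ▸ Or.inr rfl
  have hR3 : R = {x, a, b} := (hR.subset_of_red_nbrs h3 h6 hx ha hb hxa hxb hab).antisymm
    (insert_subset hx.1 (pair_subset ha.1 hb.1))
  rw [hR3, ncard_eq_three]
  exact ⟨x, a, b, hxa.ne, hxb.ne, hab, rfl⟩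

/-- in a `(C₃, C₅, C₆)`-free graph, if `R` is a minimal redundant set,
`x ∈ red(R)`, and `|red(R) ∩ N(x)| = 2`, then `|R| = 3`. -/
theorem stmt13 [Fintype V] (G : SimpleGraph V) (h3 : CFree G 3) (h5 : CFree G 5)
    (h6 : CFree G 6) (R : Set V) (hR : MinRedundant G R) (x : V) (hx : x ∈ redVerts G R)
    (htwo : (redVerts G R ∩ G.neighborSet x).ncard = 2) :
    R.ncard = 3 :=
  stmt13_general G h3 h6 R hR x hx htwo
end
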